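/- arXiv:0909.1732 — 2 statements merged into one kernel-verified Lean document; each statement's English description precedes it below -/
import Mathlib

section
/- Let 𝔼 be an exceptional collection in a saturated triangulated category D with Serre functor S_D. Then on the subcategory ^⊥𝔼 one has S_{𝔼^⊥} ∘ L_𝔼 = S_D|_{^⊥𝔼} = L_𝔼 ∘ S_{^⊥𝔼}, where S_{𝔼^⊥} and S_{^⊥𝔼} are the Serre functors of the admissible subcategories 𝔼^⊥ and ^⊥𝔼. -/
open CategoryTheory Limits Pretriangulated

universe v u

variable (C : Type u) [Category.{v} C] [Preadditive C] [HasZeroObject C]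
  [HasShift C ℤ] [∀ n : ℤ, (CategoryTheory.shiftFunctor C n).Additive] [Pretriangulated C]
  [CategoryTheory.Linear ℂ C]

/-- All graded morphisms from `X` to `Y` vanish. -/
def NoHoms (X Y : C) : Prop := ∀ n : ℤ, ∀ f : X ⟶ Y⟦n⟧, f = 0

/-- The category `C` is of finite type: total graded Hom spaces are finite dimensional. -/
def FiniteType : Prop :=
  ∀ X Y : C, (∀ n : ℤ, FiniteDimensional ℂ (X ⟶ Y⟦n⟧)) ∧
    {n : ℤ | ∃ f : X ⟶ Y⟦n⟧, f ≠ 0}.Finite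

/-- An exceptional object: `Hom^•(E,E) = ℂ`, concentrated in degree `0`. -/
def IsExceptional (E : C) : Prop :=
  (∀ n : ℤ, n ≠ 0 → ∀ f : E ⟶ E⟦n⟧, f = 0) ∧ Module.finrank ℂ (E ⟶ E) = 1

/-- Membership in the smallest strictly full triangulated subcategory containing `S`. -/
inductive genTriang (S : Set C) : C → Prop
  | of (X : C) (hX : X ∈ S) : genTriang S X
  | isZero (X : C) (hX : IsZero X) : genTriang S X
  | iso {X Y : C} (e : X ≅ Y) (hX : genTriang S X) : genTriang S Y
  | shift (X : C) (n : ℤ) (hX : genTriang S X) : genTriang S (X⟦n⟧)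
  | ext₂ (T : Triangle C) (hT : T ∈ distTriang C) (h₁ : genTriang S T.obj₁)
      (h₃ : genTriang S T.obj₃) : genTriang S T.obj₂

/-- The left orthogonal `^⊥S`. -/
def leftOrth (S : Set C) : Set C := {X | ∀ Y ∈ S, NoHoms C X Y}

/-- The right orthogonal `S^⊥`. -/
def rightOrth (S : Set C) : Set C := {X | ∀ Y ∈ S, NoHoms C Y X}

/-- `Y` is the left mutation of `X` through (the subcategory generated by) `S`. -/
def IsLeftMutation (S : Set C) (X Y : C) : Prop :=
  X ∈ leftOrth C S ∧ Y ∈ rightOrth C S ∧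
    ∃ (A : C) (f : A ⟶ X) (g : X ⟶ Y) (h : Y ⟶ A⟦(1:ℤ)⟧),
      genTriang C S A ∧ Triangle.mk f g h ∈ distTriang C

/-- `X` is the right mutation of `Y` through (the subcategory generated by) `S`. -/
def IsRightMutation (S : Set C) (X Y : C) : Prop :=
  X ∈ leftOrth C S ∧ Y ∈ rightOrth C S ∧
    ∃ (A : C) (f : X ⟶ Y) (g : Y ⟶ A) (h : A ⟶ X⟦(1:ℤ)⟧),
      genTriang C S A ∧ Triangle.mk f g h ∈ distTriang C

/-- `IterLeftMut l X Y` : `Y ≅ L_{E₁} ⋯ L_{E_k} (X)` where `l = [E₁, …, E_k]`. -/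
def IterLeftMut : List C → C → C → Prop
  | [], X, Y => Nonempty (X ≅ Y)
  | (E :: t), X, Y => ∃ Z, IterLeftMut t X Z ∧ IsLeftMutation C {E} Z Y

/-- `IterRightMut l Y X` : `X ≅ R_{E_k} ⋯ R_{E₁} (Y)` where `l = [E₁, …, E_k]`. -/
def IterRightMut : List C → C → C → Prop
  | [], Y, X => Nonempty (Y ≅ X)
  | (E :: t), Y, X => ∃ Z, IsRightMutation C {E} Z Y ∧ IterRightMut t Z X

/-- `E 0, …, E (n-1)` is an exceptional collection. -/
def ExcCollection (n : ℕ) (E : ℕ → C) : Prop :=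
  (∀ i < n, IsExceptional C (E i)) ∧
    ∀ i j, i < j → j < n → NoHoms C (E j) (E i)

/-- The set of objects of the collection `E 0, …, E (n-1)`. -/
def collSet (n : ℕ) (E : ℕ → C) : Set C := {X | ∃ i < n, X = E i}


/-- Serre-functor data on the (full triangulated) subcategory of `C` whose objects
form the set `P`: a functor preserving `P`, with a perfect, natural pairing
`Hom(X,Y) ⊗ Hom(Y, S X) → ℂ` for `X, Y ∈ P`, giving `Hom(X,Y) ≅ Hom(Y, S X)*`. -/
structure SerreDataOn (P : Set C) where
  S : C ⥤ C
  maps_mem : ∀ X ∈ P, S.obj X ∈ P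
  pairing : ∀ X Y : C, (X ⟶ Y) →ₗ[ℂ] ((Y ⟶ S.obj X) →ₗ[ℂ] ℂ)
  bij : ∀ X ∈ P, ∀ Y ∈ P,
    Function.Bijective fun (u : X ⟶ Y) => pairing X Y u
  nat_left : ∀ {A A' B : C} (f : A' ⟶ A) (u : A ⟶ B) (v : B ⟶ S.obj A'),
    pairing A' B (f ≫ u) v = pairing A B u (v ≫ S.map f)
  nat_right : ∀ {A B B' : C} (u : A ⟶ B) (g : B ⟶ B') (v : B' ⟶ S.obj A),
    pairing A B' (u ≫ g) v = pairing A B u (g ≫ v)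


/-!
Each left mutation through `E` is a morphism `Z' ⟶ Z` whose cone lies in `⟨E⟩`; composing them
gives `ψ : X ⟶ Y` such that `ψ ≫ -` identifies `Hom(Y, A)` with `Hom(X, A)` for `A ∈ 𝔼^⊥`, and
dually `- ≫ ψ` identifies `Hom(T, X)` with `Hom(T, Y)` for `T ∈ ^⊥𝔼`. For `A ∈ 𝔼^⊥` this gives
natural isomorphisms `Hom(A, S_{𝔼^⊥} Y) ≅ Hom(Y, A)^* ≅ Hom(X, A)^* ≅ Hom(A, S_D X)`, and since both
`S_{𝔼^⊥} Y` and `S_D X` lie in `𝔼^⊥`, the Yoneda argument makes them isomorphic.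

For the second identity, finite type lets one resolve any `A ∈ 𝔼^⊥` by right mutations: the
triangle `B → A → ⊕ₖ E⟦k⟧^{dₖ}` built from bases of the spaces `Hom(A, E⟦k⟧)` has `B ∈ ^⊥E`.
Resolving `S_D X` in this way gives `Z ∈ ^⊥𝔼` with `S_D X` its iterated left mutation, and for
`T ∈ ^⊥𝔼` one has `Hom(T, Z) ≅ Hom(T, S_D X) ≅ Hom(X, T)^* ≅ Hom(T, S_{^⊥𝔼} X)`, so that
`Z ≅ S_{^⊥𝔼} X`.
-/

section

variable {C}

section
omit [HasZeroObject C] [∀ n : ℤ, (shiftFunctor C n).Additive] [Pretriangulated C]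
  [CategoryTheory.Linear ℂ C]

lemma noHoms_iff_leftOrthogonal {X Y : C} :
    NoHoms C X Y ↔ ((ObjectProperty.singleton Y).shiftClosure ℤ).leftOrthogonal X := by
  constructor
  · rintro h Z f ⟨Y', n, e, hY'⟩
    obtain rfl := (ObjectProperty.singleton_iff _ _).1 hY'
    simpa using congrArg (· ≫ e.inv) (h n (f ≫ e.hom))
  · exact fun h n f => h f ⟨Y, n, Iso.refl _, ObjectProperty.ofObj_apply _ ()⟩

lemma NoHoms.eq_zero {X Y : C} (h : NoHoms C X Y) (f : X ⟶ Y) : f = 0 :=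
  noHoms_iff_leftOrthogonal.1 h f
    ⟨Y, 0, (shiftFunctorZero C ℤ).symm.app Y, ObjectProperty.ofObj_apply _ ()⟩

lemma NoHoms.of_iso_src {X X' F : C} (e : X ≅ X') (h : NoHoms C X' F) : NoHoms C X F :=
  noHoms_iff_leftOrthogonal.2
    (ObjectProperty.prop_of_iso _ e.symm (noHoms_iff_leftOrthogonal.1 h))

end

omit [HasZeroObject C] [Pretriangulated C] [CategoryTheory.Linear ℂ C] in
lemma noHoms_iff_rightOrthogonal {X Y : C} :
    NoHoms C X Y ↔ ((ObjectProperty.singleton X).shiftClosure ℤ).rightOrthogonal Y := by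
  constructor
  · rintro h Z f ⟨X', n, e, hX'⟩
    obtain rfl := (ObjectProperty.singleton_iff _ _).1 hX'
    have hX : ∀ g : X⟦n⟧ ⟶ Y, g = 0 := fun g => by
      apply (shiftFunctor C (-n)).map_injective
      rw [Functor.map_zero,
        ← cancel_epi ((shiftFunctorCompIsoId C n (-n) (add_neg_cancel n)).inv.app X), comp_zero]
      exact h _ _
    rw [← e.hom_inv_id_assoc f, hX (e.inv ≫ f), comp_zero]
  · intro h n f
    apply (shiftFunctor C (-n)).map_injective
    rw [Functor.map_zero,
      ← cancel_mono ((shiftFunctorCompIsoId C n (-n) (add_neg_cancel n)).hom.app Y), zero_comp]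
    exact h _ ⟨X, -n, Iso.refl _, ObjectProperty.ofObj_apply _ ()⟩

section
omit [CategoryTheory.Linear ℂ C]

instance genTriang_isClosedUnderIsomorphisms (S : Set C) :
    ObjectProperty.IsClosedUnderIsomorphisms (genTriang C S) :=
  ⟨fun e h => genTriang.iso e h⟩

open ZeroObject in
instance genTriang_isTriangulated (S : Set C) :
    ObjectProperty.IsTriangulated (genTriang C S) where
  exists_zero := ⟨0, isZero_zero C, genTriang.isZero _ (isZero_zero C)⟩
  isStableUnderShiftBy n := ⟨fun X h => genTriang.shift X n h⟩
  toIsTriangulatedClosed₂ := .mk' fun T hT h₁ h₃ => genTriang.ext₂ T hT h₁ h₃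

lemma genTriang_le {S : Set C} {P : ObjectProperty C} [P.IsTriangulated]
    [P.IsClosedUnderIsomorphisms] (hS : ∀ X ∈ S, P X) : genTriang C S ≤ P := by
  intro X hX
  induction hX with
  | of X hX => exact hS X hX
  | isZero X hX => exact P.prop_of_isZero hX
  | iso e _ ih => exact P.prop_of_iso e ih
  | shift X n _ ih => exact P.le_shift n X ih
  | ext₂ T hT _ _ ih₁ ih₃ => exact P.ext_of_isTriangulatedClosed₂ T hT ih₁ ih₃

lemma genTriang_biproduct {S : Set C} {ι : Type*} [Finite ι] {P : ι → C}
    (h : ∀ i, genTriang C S (P i)) : genTriang C S (⨁ P) :=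
  ObjectProperty.prop_of_iso _ (biproduct.isoProduct P).symm (ObjectProperty.prop_product _ h)

lemma noHoms_src_of_genTriang {S : Set C} {F A : C} (hS : ∀ s ∈ S, NoHoms C s F)
    (hA : genTriang C S A) : NoHoms C A F := by
  simp only [noHoms_iff_leftOrthogonal] at *
  exact genTriang_le hS A hA

lemma noHoms_tgt_of_genTriang {S : Set C} {G A : C} (hS : ∀ s ∈ S, NoHoms C G s)
    (hA : genTriang C S A) : NoHoms C G A := by
  simp only [noHoms_iff_rightOrthogonal] at *
  exact genTriang_le hS A hA

lemma rightOrthogonal_genTriang_of_noHoms {S : Set C} {A : C} (hA : ∀ s ∈ S, NoHoms C s A) :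
    ObjectProperty.rightOrthogonal (genTriang C S) A :=
  fun _ f hX => (noHoms_src_of_genTriang hA hX).eq_zero f

lemma leftOrthogonal_genTriang_of_noHoms {S : Set C} {A : C} (hA : ∀ s ∈ S, NoHoms C A s) :
    ObjectProperty.leftOrthogonal (genTriang C S) A :=
  fun _ f hX => (noHoms_tgt_of_genTriang hA hX).eq_zero f

lemma noHoms_obj₂_src {T : Triangle C} (hT : T ∈ distTriang C) {F : C}
    (h₁ : NoHoms C T.obj₁ F) (h₃ : NoHoms C T.obj₃ F) : NoHoms C T.obj₂ F := by
  simp only [noHoms_iff_leftOrthogonal] at *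
  exact ObjectProperty.ext_of_isTriangulatedClosed₂ _ T hT h₁ h₃

lemma noHoms_obj₂_tgt {T : Triangle C} (hT : T ∈ distTriang C) {G : C}
    (h₁ : NoHoms C G T.obj₁) (h₃ : NoHoms C G T.obj₃) : NoHoms C G T.obj₂ := by
  simp only [noHoms_iff_rightOrthogonal] at *
  exact ObjectProperty.ext_of_isTriangulatedClosed₂ _ T hT h₁ h₃

lemma noHoms_obj₃_tgt {T : Triangle C} (hT : T ∈ distTriang C) {G : C}
    (h₁ : NoHoms C G T.obj₁) (h₂ : NoHoms C G T.obj₂) : NoHoms C G T.obj₃ := by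
  simp only [noHoms_iff_rightOrthogonal] at *
  exact ObjectProperty.ext_of_isTriangulatedClosed₃ _ T hT h₁ h₂

/-- The shifted map `f⟦1⟧` is killed by `T.mor₃` because `T.mor₂ ≫ -` is injective, hence
factors through `-T.mor₁⟦1⟧`; surjectivity of `T.mor₂ ≫ -` then makes it vanish. -/
lemma noHoms_obj₁_of_bijective {T : Triangle C} (hT : T ∈ distTriang C) {F : C}
    (h : ∀ j : ℤ, Function.Bijective fun g : T.obj₃ ⟶ F⟦j⟧ => T.mor₂ ≫ g) :
    NoHoms C T.obj₁ F := by
  intro k f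
  apply (shiftFunctor C (1 : ℤ)).map_injective
  rw [Functor.map_zero]
  have h₃ : T.mor₃ ≫ f⟦(1 : ℤ)⟧' = 0 := by
    let e := (shiftFunctorAdd' C k 1 (k + 1) rfl).app F
    have : T.mor₃ ≫ f⟦(1 : ℤ)⟧' ≫ e.inv = 0 :=
      (h (k + 1)).1 (by simp [comp_distTriang_mor_zero₂₃_assoc _ hT])
    simpa using this =≫ e.hom
  obtain ⟨g, hg⟩ : ∃ g : T.obj₂⟦(1 : ℤ)⟧ ⟶ _, f⟦(1 : ℤ)⟧' = (-T.mor₁⟦(1 : ℤ)⟧') ≫ g :=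
    Triangle.yoneda_exact₃ _ (rot_of_distTriang _ hT) _ h₃
  obtain ⟨g₀, rfl⟩ := (shiftFunctor C (1 : ℤ)).map_surjective g
  obtain ⟨g₁, rfl⟩ := (h k).2 g₀
  rw [hg, Preadditive.neg_comp, ← Functor.map_comp, comp_distTriang_mor_zero₁₂_assoc _ hT,
    zero_comp, Functor.map_zero, neg_zero]

lemma IsLeftMutation.exists_trW {S : Set C} {X Y : C} (h : IsLeftMutation C S X Y) :
    ∃ g : X ⟶ Y, ObjectProperty.trW (genTriang C S) g := by
  obtain ⟨-, -, A, f, g, h, hA, hT⟩ := h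
  exact ⟨g, ObjectProperty.trW.mk' _ hT hA⟩

lemma IterLeftMut.exists_hom_bijective {l : List C} {X Y : C} (h : IterLeftMut C l X Y) :
    ∃ ψ : X ⟶ Y,
      (∀ A : C, (∀ G ∈ l, NoHoms C G A) → Function.Bijective fun u : Y ⟶ A => ψ ≫ u) ∧
      (∀ T : C, (∀ G ∈ l, NoHoms C T G) → Function.Bijective fun u : T ⟶ X => u ≫ ψ) := by
  induction l generalizing Y with
  | nil =>
    obtain ⟨e⟩ := h
    exact ⟨e.hom, fun A _ => (e.homFromEquiv (Z := A)).symm.bijective,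
      fun T _ => (e.homToEquiv (Z := T)).bijective⟩
  | cons F t ih =>
    obtain ⟨Z, hZ, hmut⟩ := h
    obtain ⟨ψ, hψsrc, hψtgt⟩ := ih hZ
    obtain ⟨g, hg⟩ := hmut.exists_trW
    refine ⟨ψ ≫ g, fun A hA => ?_, fun T hT => ?_⟩
    · have hgA := rightOrthogonal_genTriang_of_noHoms (S := {F})
        fun s hs => hs ▸ hA F List.mem_cons_self
      rw [← ObjectProperty.isLocal_trW] at hgA
      simpa [Function.comp_def] using
        (hψsrc A fun G hG => hA G (List.mem_cons_of_mem _ hG)).comp (hgA g hg)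
    · have hgT := leftOrthogonal_genTriang_of_noHoms (S := {F})
        fun s hs => hs ▸ hT F List.mem_cons_self
      rw [← ObjectProperty.isColocal_trW] at hgT
      simpa [Function.comp_def] using
        (hgT g hg).comp (hψtgt T fun G hG => hT G (List.mem_cons_of_mem _ hG))

lemma IterLeftMut.noHoms_src_of_noHoms {l : List C} {X Y F : C} (h : IterLeftMut C l X Y)
    (hY : NoHoms C Y F) (hl : ∀ G ∈ l, NoHoms C G F) : NoHoms C X F := by
  induction l generalizing Y with
  | nil => exact hY.of_iso_src h.some
  | cons G t ih =>
    obtain ⟨Z, hZ, -, -, A, f, g, k, hA, hT⟩ := h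
    have hAF : NoHoms C A F :=
      noHoms_src_of_genTriang (S := {G}) (fun s hs => hs ▸ hl G List.mem_cons_self) hA
    exact ih hZ (noHoms_obj₂_src hT hAF hY) fun G' hG' => hl G' (List.mem_cons_of_mem _ hG')

lemma IterLeftMut.noHoms_src {l : List C} {X Y : C} (h : IterLeftMut C l X Y)
    (hl : l.Pairwise fun F G => NoHoms C G F) : ∀ G ∈ l, NoHoms C X G := by
  induction l generalizing Y with
  | nil => simp
  | cons F t ih =>
    obtain ⟨Z, hZ, hZF, -⟩ := h
    rw [List.pairwise_cons] at hl
    rintro G (_ | ⟨_, hG⟩)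
    · exact hZ.noHoms_src_of_noHoms (hZF F rfl) hl.1
    · exact ih hZ hl.2 G hG

lemma IterLeftMut.noHoms_tgt {l : List C} {X Y : C} (h : IterLeftMut C l X Y)
    (hl : l.Pairwise fun F G => NoHoms C G F) : ∀ G ∈ l, NoHoms C G Y := by
  induction l generalizing Y with
  | nil => simp
  | cons F t ih =>
    obtain ⟨Z, hZ, -, hYF, A, f, g, k, hA, hT⟩ := h
    rw [List.pairwise_cons] at hl
    rintro G (_ | ⟨_, hG⟩)
    · exact hYF F rfl
    · exact noHoms_obj₃_tgt hT
        (noHoms_tgt_of_genTriang (S := {F}) (fun s hs => hs ▸ hl.1 G hG) hA) (ih hZ hl.2 G hG)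

lemma IterLeftMut.of_iso_src {l : List C} {X X' Y : C} (h : IterLeftMut C l X Y) (e : X' ≅ X) :
    IterLeftMut C l X' Y := by
  induction l generalizing Y with
  | nil => exact ⟨e.trans h.some⟩
  | cons F t ih =>
    obtain ⟨Z, hZ, hmut⟩ := h
    exact ⟨Z, ih hZ, hmut⟩

end

section
omit [HasZeroObject C] [HasShift C ℤ] [∀ n : ℤ, (shiftFunctor C n).Additive] [Pretriangulated C]

/-- An eigenvector `v` of `- ≫ h` is invertible, so `v ≫ h = s • v` forces `h = s • 𝟙 G`. -/
lemma exists_eq_smul_id_of_isIso {G : C} [FiniteDimensional ℂ (G ⟶ G)]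
    (hG : ∀ f : G ⟶ G, f ≠ 0 → IsIso f) (h : G ⟶ G) : ∃ s : ℂ, h = s • 𝟙 G := by
  rcases subsingleton_or_nontrivial (G ⟶ G) with _ | _
  · exact ⟨0, Subsingleton.elim _ _⟩
  obtain ⟨s, hs⟩ := Module.End.exists_eigenvalue (Linear.rightComp ℂ G h)
  obtain ⟨v, hv⟩ := hs.exists_hasEigenvector
  have hvh : v ≫ h = s • v := hv.apply_eq_smul
  have := hG v hv.2
  exact ⟨s, by simpa using inv v ≫= hvh⟩

variable [HasFiniteBiproducts C]

lemma exists_bijective_biproduct_lift_comp {A G : C} [FiniteDimensional ℂ (A ⟶ G)]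
    (hG : ∀ h : G ⟶ G, ∃ s : ℂ, h = s • 𝟙 G) :
    ∃ (d : ℕ) (c : A ⟶ ⨁ fun _ : Fin d => G),
      Function.Bijective fun g : (⨁ fun _ : Fin d => G) ⟶ G => c ≫ g := by
  let b := Module.finBasis ℂ (A ⟶ G)
  refine ⟨_, biproduct.lift b, ?_, fun f => ⟨∑ i, b.repr f i • biproduct.π _ i, ?_⟩⟩
  · refine (injective_iff_map_eq_zero (Linear.leftComp ℂ G (biproduct.lift b))).2 fun g hg => ?_
    choose s hs using fun i => hG (biproduct.ι (fun _ : Fin _ => G) i ≫ g)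
    have hsum : ∑ i, s i • b i = 0 := by
      rw [← hg]
      simp [biproduct.lift_eq, Preadditive.sum_comp, hs]
    have hs0 := Fintype.linearIndependent_iff.1 b.linearIndependent s hsum
    ext i
    simp [hs, hs0]
  · simp [Preadditive.comp_sum, b.sum_repr]

omit [CategoryTheory.Linear ℂ C] in
lemma bijective_biproduct_lift_comp {ι : Type*} [Fintype ι] [DecidableEq ι] {A G : C}
    {P : ι → C} (c : ∀ i, A ⟶ P i) (i₀ : ι)
    (hc : Function.Bijective fun g : P i₀ ⟶ G => c i₀ ≫ g)
    (hP : ∀ i ≠ i₀, ∀ g : P i ⟶ G, g = 0) :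
    Function.Bijective fun g : (⨁ P) ⟶ G => biproduct.lift c ≫ g := by
  have hπ : ∀ g : (⨁ P) ⟶ G, g = biproduct.π P i₀ ≫ biproduct.ι P i₀ ≫ g := by
    intro g
    ext i
    by_cases hi : i = i₀
    · subst hi; simp
    · simp [hP i hi]
  refine ⟨fun g₁ g₂ hg => ?_, fun f => ?_⟩
  · have : c i₀ ≫ biproduct.ι P i₀ ≫ g₁ = c i₀ ≫ biproduct.ι P i₀ ≫ g₂ := by
      simpa [← biproduct.lift_π_assoc c i₀, ← hπ] using hg
    rw [hπ g₁, hπ g₂, hc.1 this]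
  · obtain ⟨g, rfl⟩ := hc.2 f
    exact ⟨biproduct.π P i₀ ≫ g, biproduct.lift_π_assoc _ _ _⟩

end

section
omit [HasZeroObject C] [Pretriangulated C]

omit [∀ n : ℤ, (shiftFunctor C n).Additive] in
lemma FiniteType.finiteDimensional (hft : FiniteType C) (X Y : C) :
    FiniteDimensional ℂ (X ⟶ Y) :=
  haveI := (hft X Y).1 0
  (Linear.homCongr ℂ (Iso.refl X) ((shiftFunctorZero C ℤ).app Y)).finiteDimensional

omit [∀ n : ℤ, (shiftFunctor C n).Additive] in
lemma IsExceptional.id_ne_zero {F : C} (hF : IsExceptional C F) : 𝟙 F ≠ 0 := by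
  intro h
  have : Subsingleton (F ⟶ F) := ⟨fun a b => by
    rw [← Category.comp_id a, ← Category.comp_id b, h, comp_zero, comp_zero]⟩
  simpa [Module.finrank_zero_of_subsingleton] using hF.2

lemma IsExceptional.shift_hom_eq_zero {F : C} (hF : IsExceptional C F) {m k : ℤ} (hmk : m ≠ k)
    (g : F⟦m⟧ ⟶ F⟦k⟧) : g = 0 := by
  apply (shiftFunctor C (-m)).map_injective
  rw [Functor.map_zero,
    ← cancel_epi ((shiftFunctorCompIsoId C m (-m) (add_neg_cancel m)).inv.app F),
    ← cancel_mono ((shiftFunctorAdd' C k (-m) (k + -m) rfl).inv.app F), comp_zero, zero_comp]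
  exact hF.1 _ (by omega) _

lemma IsExceptional.isIso_of_ne_zero {F : C} (hF : IsExceptional C F) (m : ℤ)
    {f : F⟦m⟧ ⟶ F⟦m⟧} (hf : f ≠ 0) : IsIso f := by
  obtain ⟨f₀, rfl⟩ := (shiftFunctor C m).map_surjective f
  obtain ⟨s, rfl⟩ := (finrank_eq_one_iff_of_nonzero' _ hF.id_ne_zero).1 hF.2 f₀
  have hs : s ≠ 0 := by rintro rfl; simp at hf
  have : IsIso (s • 𝟙 F) := ⟨s⁻¹ • 𝟙 F, by simp [smul_smul, hs], by simp [smul_smul, hs]⟩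
  infer_instance

lemma IsExceptional.shift_endo_eq_smul_id {F : C} (hF : IsExceptional C F) (hft : FiniteType C)
    (m : ℤ) (h : F⟦m⟧ ⟶ F⟦m⟧) : ∃ s : ℂ, h = s • 𝟙 (F⟦m⟧) :=
  haveI := hft.finiteDimensional (F⟦m⟧) (F⟦m⟧)
  exists_eq_smul_id_of_isIso (fun _ => hF.isIso_of_ne_zero m) h

end

lemma IsExceptional.exists_genTriang_approximation {F : C} (hF : IsExceptional C F)
    (hft : FiniteType C) (A : C) :
    ∃ (A' : C) (c : A ⟶ A'), genTriang C {F} A' ∧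
      ∀ j : ℤ, Function.Bijective fun g : A' ⟶ F⟦j⟧ => c ≫ g := by
  have := (hft A F).1
  let T := (hft A F).2.toFinset
  choose d c hc using fun k : T => exists_bijective_biproduct_lift_comp (A := A)
    (G := F⟦(k : ℤ)⟧) (hF.shift_endo_eq_smul_id hft k)
  have hcopies (k : T) (j : ℤ) (hkj : (k : ℤ) ≠ j)
      (g : (⨁ fun _ : Fin (d k) => F⟦(k : ℤ)⟧) ⟶ F⟦j⟧) : g = 0 := by
    ext i
    simpa using hF.shift_hom_eq_zero hkj (biproduct.ι (fun _ : Fin (d k) => F⟦(k : ℤ)⟧) i ≫ g)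
  refine ⟨_, biproduct.lift c, genTriang_biproduct fun k => genTriang_biproduct fun _ =>
    genTriang.shift _ _ (genTriang.of _ rfl), fun j => ?_⟩
  by_cases hj : j ∈ T
  · exact bijective_biproduct_lift_comp c ⟨j, hj⟩ (hc _)
      fun k hk => hcopies k j fun h => hk (Subtype.ext h)
  · have hA (f : A ⟶ F⟦j⟧) : f = 0 := by
      by_contra hf
      exact hj ((hft A F).2.mem_toFinset.2 ⟨f, hf⟩)
    refine ⟨fun g₁ g₂ _ => biproduct.hom_ext' _ _ fun k => ?_, fun f => ⟨0, by simp [hA f]⟩⟩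
    have hkj : (k : ℤ) ≠ j := fun h => hj (h ▸ k.2)
    exact (hcopies k j hkj _).trans (hcopies k j hkj _).symm

lemma IsExceptional.exists_isLeftMutation {F : C} (hF : IsExceptional C F) (hft : FiniteType C)
    {A : C} (hA : NoHoms C F A) : ∃ B : C, IsLeftMutation C {F} B A := by
  obtain ⟨A', c, hA', hc⟩ := hF.exists_genTriang_approximation hft A
  obtain ⟨B, ρ, δ, hT⟩ := distinguished_cocone_triangle₁ c
  exact ⟨B, fun _ h => h ▸ noHoms_obj₁_of_bijective hT hc, fun _ h => h ▸ hA,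
    _, _, _, _, genTriang.shift _ (-1) hA', inv_rot_of_distTriang _ hT⟩

lemma exists_iterLeftMut (hft : FiniteType C) {l : List C} (hexc : ∀ F ∈ l, IsExceptional C F)
    (hl : l.Pairwise fun F G => NoHoms C G F) {A : C} (hA : ∀ G ∈ l, NoHoms C G A) :
    ∃ Z : C, IterLeftMut C l Z A := by
  induction l generalizing A with
  | nil => exact ⟨A, ⟨Iso.refl A⟩⟩
  | cons F t ih =>
    rw [List.pairwise_cons] at hl
    obtain ⟨B, hB⟩ :=
      (hexc F List.mem_cons_self).exists_isLeftMutation hft (hA F List.mem_cons_self)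
    obtain ⟨-, -, A₀, f, g, h, hA₀, hT⟩ := id hB
    obtain ⟨Z, hZ⟩ := ih (fun G hG => hexc G (List.mem_cons_of_mem _ hG)) hl.2 fun G hG =>
      noHoms_obj₂_tgt hT (noHoms_tgt_of_genTriang (S := {F}) (fun s hs => hs ▸ hl.1 G hG) hA₀)
        (hA G (List.mem_cons_of_mem _ hG))
    exact ⟨Z, B, hZ, hB⟩

section
omit [HasZeroObject C] [HasShift C ℤ] [∀ n : ℤ, (shiftFunctor C n).Additive] [Pretriangulated C]

omit [Preadditive C] [CategoryTheory.Linear ℂ C] in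
lemma nonempty_iso_of_natural_bijective {F : C → Type*}
    (res : ∀ {A A' : C}, (A' ⟶ A) → F A → F A') {M N : C}
    (α : ∀ A, (A ⟶ M) → F A) (β : ∀ A, (A ⟶ N) → F A)
    (hα : ∀ {A A'} (g : A' ⟶ A) v, α A' (g ≫ v) = res g (α A v))
    (hβ : ∀ {A A'} (g : A' ⟶ A) w, β A' (g ≫ w) = res g (β A w))
    (hαM : Function.Bijective (α M)) (hαN : Function.Bijective (α N))
    (hβM : Function.Bijective (β M)) (hβN : Function.Bijective (β N)) : Nonempty (M ≅ N) := by
  obtain ⟨a, ha⟩ := hβM.2 (α M (𝟙 M))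
  obtain ⟨b, hb⟩ := hαN.2 (β N (𝟙 N))
  refine ⟨⟨a, b, hαM.1 ?_, hβN.1 ?_⟩⟩
  · rw [hα, hb, ← hβ, Category.comp_id, ha]
  · rw [hβ, ha, ← hα, Category.comp_id, hb]

lemma SerreDataOn.bijective_flip {P : Set C} (S : SerreDataOn C P) {X A : C} (hX : X ∈ P)
    (hA : A ∈ P) [FiniteDimensional ℂ (X ⟶ A)] : Function.Bijective (S.pairing X A).flip :=
  LinearMap.flip_bijective_iff₁.2 (S.bij X hX A hA)

lemma SerreDataOn.flip_comp {P : Set C} (S : SerreDataOn C P) {X A A' : C} (g : A' ⟶ A)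
    (v : A ⟶ S.S.obj X) :
    (S.pairing X A').flip (g ≫ v) = ((S.pairing X A).flip v).comp (Linear.rightComp ℂ X g) :=
  LinearMap.ext fun u => (S.nat_right u g v).symm

/-- On `P`, both `S Y` and `SD X` represent `A ↦ Hom(Y, A)^*`. -/
lemma SerreDataOn.nonempty_iso_of_bijective_precomp {P : Set C} (S : SerreDataOn C P)
    (SD : SerreDataOn C Set.univ) [∀ X Y : C, FiniteDimensional ℂ (X ⟶ Y)] {X Y : C}
    (ψ : X ⟶ Y) (hψ : ∀ A ∈ P, Function.Bijective fun u : Y ⟶ A => ψ ≫ u) (hY : Y ∈ P)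
    (hX : SD.S.obj X ∈ P) : Nonempty (S.S.obj Y ≅ SD.S.obj X) := by
  have hβ (A : C) (hA : A ∈ P) :=
    ((Linear.leftComp ℂ A ψ).dualMap_bijective_iff.2 (hψ A hA)).comp
      (SD.bijective_flip trivial trivial)
  exact nonempty_iso_of_natural_bijective (F := fun A => Module.Dual ℂ (Y ⟶ A))
    (fun g φ => φ.comp (Linear.rightComp ℂ Y g)) (fun A v => (S.pairing Y A).flip v)
    (fun A w => ((SD.pairing X A).flip w).comp (Linear.leftComp ℂ A ψ)) (S.flip_comp ·)
    (fun g w => by ext; simp [SD.flip_comp]) (S.bijective_flip hY (S.maps_mem Y hY))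
    (S.bijective_flip hY hX) (hβ _ (S.maps_mem Y hY)) (hβ _ hX)

/-- On `P`, both `Z` and `S X` represent `T ↦ Hom(X, T)^*`. -/
lemma SerreDataOn.nonempty_iso_of_bijective_postcomp {P : Set C} (S : SerreDataOn C P)
    (SD : SerreDataOn C Set.univ) [∀ X Y : C, FiniteDimensional ℂ (X ⟶ Y)] {X Z : C}
    (ρ : Z ⟶ SD.S.obj X) (hρ : ∀ T ∈ P, Function.Bijective fun u : T ⟶ Z => u ≫ ρ)
    (hX : X ∈ P) (hZ : Z ∈ P) : Nonempty (Z ≅ S.S.obj X) := by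
  have hα (T : C) (hT : T ∈ P) := (SD.bijective_flip trivial trivial).comp (hρ T hT)
  exact nonempty_iso_of_natural_bijective (F := fun A => Module.Dual ℂ (X ⟶ A))
    (fun g φ => φ.comp (Linear.rightComp ℂ X g)) (fun A v => (SD.pairing X A).flip (v ≫ ρ))
    (fun A w => (S.pairing X A).flip w) (fun g v => by rw [Category.assoc, SD.flip_comp])
    (S.flip_comp ·) (hα _ hZ) (hα _ (S.maps_mem X hX)) (S.bijective_flip hX hZ)
    (S.bijective_flip hX (S.maps_mem X hX))

end

omit [HasZeroObject C] [Pretriangulated C] in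
lemma SerreDataOn.noHoms_obj (S : SerreDataOn C Set.univ) {X F : C} (h : NoHoms C X F) :
    NoHoms C F (S.S.obj X) := by
  refine noHoms_iff_rightOrthogonal.2 fun Z w hZ => ?_
  refine (Module.forall_dual_apply_eq_zero_iff ℂ w).1 fun φ => ?_
  obtain ⟨u, rfl⟩ := (S.bij X trivial Z trivial).2 φ
  simp [noHoms_iff_leftOrthogonal.1 h u hZ]

section
omit [HasZeroObject C] [∀ n : ℤ, (shiftFunctor C n).Additive] [Pretriangulated C]
  [CategoryTheory.Linear ℂ C]

omit [Category.{v} C] [Preadditive C] [HasShift C ℤ] in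
lemma mem_collSet_iff {n : ℕ} {E : ℕ → C} {G : C} :
    G ∈ collSet C n E ↔ G ∈ (List.range n).map E := by
  simp [collSet, eq_comm]

lemma mem_leftOrth_collSet {n : ℕ} {E : ℕ → C} {X : C} :
    X ∈ leftOrth C (collSet C n E) ↔ ∀ G ∈ (List.range n).map E, NoHoms C X G :=
  ⟨fun h G hG => h G (mem_collSet_iff.2 hG), fun h G hG => h G (mem_collSet_iff.1 hG)⟩

lemma mem_rightOrth_collSet {n : ℕ} {E : ℕ → C} {X : C} :
    X ∈ rightOrth C (collSet C n E) ↔ ∀ G ∈ (List.range n).map E, NoHoms C G X :=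
  ⟨fun h G hG => h G (mem_collSet_iff.2 hG), fun h G hG => h G (mem_collSet_iff.1 hG)⟩

end

section
omit [HasZeroObject C] [∀ n : ℤ, (shiftFunctor C n).Additive] [Pretriangulated C]

lemma ExcCollection.pairwise {n : ℕ} {E : ℕ → C} (hE : ExcCollection C n E) :
    ((List.range n).map E).Pairwise fun F G => NoHoms C G F := by
  rw [List.pairwise_map]
  exact List.pairwise_lt_range.imp_of_mem fun _ hj hij => hE.2 _ _ hij (List.mem_range.1 hj)

lemma ExcCollection.isExceptional {n : ℕ} {E : ℕ → C} (hE : ExcCollection C n E) :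
    ∀ F ∈ (List.range n).map E, IsExceptional C F := by
  simpa using hE.1

end

end

/-- For an exceptional collection `𝔼` in a saturated triangulated category
with Serre functor `S_D`, one has `S_{𝔼^⊥} ∘ L_𝔼 = S_D|_{^⊥𝔼} = L_𝔼 ∘ S_{^⊥𝔼}` on `^⊥𝔼`. -/
theorem serre_functor_commutes_with_mutation (hft : FiniteType C) (n : ℕ) (E : ℕ → C)
    (hE : ExcCollection C n E)
    (SD : SerreDataOn C (Set.univ : Set C))
    (SL : SerreDataOn C (leftOrth C (collSet C n E)))
    (SR : SerreDataOn C (rightOrth C (collSet C n E)))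
    (X Y : C) (hX : X ∈ leftOrth C (collSet C n E))
    (hXY : IterLeftMut C ((List.range n).map E) X Y) :
    Nonempty (SR.S.obj Y ≅ SD.S.obj X) ∧
      IterLeftMut C ((List.range n).map E) (SL.S.obj X) (SD.S.obj X) := by
  have := hft.finiteDimensional
  have hSX : SD.S.obj X ∈ rightOrth C (collSet C n E) :=
    mem_rightOrth_collSet.2 fun G hG => SD.noHoms_obj (mem_leftOrth_collSet.1 hX G hG)
  have hY : Y ∈ rightOrth C (collSet C n E) :=
    mem_rightOrth_collSet.2 (hXY.noHoms_tgt hE.pairwise)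
  obtain ⟨ψ, hψ, -⟩ := hXY.exists_hom_bijective
  obtain ⟨Z, hZ⟩ := exists_iterLeftMut hft hE.isExceptional hE.pairwise
    (mem_rightOrth_collSet.1 hSX)
  obtain ⟨ρ, -, hρ⟩ := hZ.exists_hom_bijective
  have hZX : Z ∈ leftOrth C (collSet C n E) := mem_leftOrth_collSet.2 (hZ.noHoms_src hE.pairwise)
  obtain ⟨e⟩ := SL.nonempty_iso_of_bijective_postcomp SD ρ
    (fun T hT => hρ T (mem_leftOrth_collSet.1 hT)) hX hZX
  exact ⟨SR.nonempty_iso_of_bijective_precomp SD ψ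
    (fun A hA => hψ A (mem_rightOrth_collSet.1 hA)) hY hSX, hZ.of_iso_src e.symm⟩
end

section
/- Let 𝔼 = (E_1,…,E_n) be a full, strong exceptional collection with dual collection 𝔽 = (F_n,…,F_1), and suppose φ: 𝔼 → Z is a levelling that is tilting at level m. Then any two distinct objects E_i, E_j with φ(E_i) = φ(E_j) = m are orthogonal (Hom^•(E_i,E_j) = 0 = Hom^•(E_j,E_i)), and moreover the dual objects F_i and F_j are orthogonal. -/
open CategoryTheory Limits Pretriangulated

universe v u

variable (C : Type u) [Category.{v} C] [Preadditive C] [HasZeroObject C]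
  [HasShift C ℤ] [∀ n : ℤ, (CategoryTheory.shiftFunctor C n).Additive] [Pretriangulated C]
  [CategoryTheory.Linear ℂ C]

/-- For `i ≤ j`, the objects at positions `i` and `j` are `p`-related (with respect to the
dual collection `F`): `Hom^k(F j, F i) = 0` for `k ≠ p`. -/
def PRelated (F : ℕ → C) (i j : ℕ) (p : ℤ) : Prop :=
  ∀ k : ℤ, k ≠ p → ∀ f : F j ⟶ (F i)⟦k⟧, f = 0


/-!
Fix `i < j` on level `m` and factor the mutation chain defining `F j` as
`E j ↦ Z := L_{E (i+1)} ⋯ L_{E (j-1)} (E j) ↦ L_{E i} Z ↦ F j`, with mutation triangle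
`A ⟶ Z ⟶ L_{E i} Z ⟶ A⟦1⟧`, `A ∈ ⟨E i⟩`. By induction on `j`, `E i` is orthogonal to the
`E l` with `i < l < j` (these lie on level `m` since `φ` is monotone), so
`Hom^•(E i, A) ≅ Hom^•(E i, E j)` is concentrated in degree `0` by strongness. Since
`Hom^•(E l, F i) = 0` for `l ≠ i`, tilting (`Hom^1(F j, F i) = 0`) gives `Hom(A, F i) = 0`.
Such an `A` would be a sum of copies of `E i`, while `Hom(E i, F i) ≠ 0`; hence `A = 0`, the
mutation through `E i` is trivial, and both orthogonalities travel along the chain.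
-/

lemma eq_zero_of_iso {D : Type*} [Category D] [HasZeroMorphisms D] {X X' Y Y' : D}
    (α : X ≅ X') (β : Y ≅ Y') (h : ∀ f : X ⟶ Y, f = 0) : ∀ f : X' ⟶ Y', f = 0 := fun f => by
  simpa using congrArg (fun g => α.inv ≫ g ≫ β.hom) (h (α.hom ≫ f ≫ β.inv))

section Shift

variable {D : Type*} [Category D] [Preadditive D] [HasShift D ℤ]

namespace NoHoms

variable {X X' Y Y' : D}

lemma hom_eq_zero (h : NoHoms D X Y) : ∀ f : X ⟶ Y, f = 0 :=
  eq_zero_of_iso (Iso.refl X) ((shiftFunctorZero D ℤ).app Y) (h 0)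

lemma of_hom_eq_zero (h₀ : ∀ f : X ⟶ Y, f = 0)
    (h : ∀ k : ℤ, k ≠ 0 → ∀ f : X ⟶ Y⟦k⟧, f = 0) : NoHoms D X Y := by
  intro k
  by_cases hk : k = 0
  · subst hk
    exact eq_zero_of_iso (Iso.refl X) ((shiftFunctorZero D ℤ).app Y).symm h₀
  · exact h k hk

lemma of_iso_left (h : NoHoms D X Y) (e : X ≅ X') : NoHoms D X' Y :=
  fun k => eq_zero_of_iso e (Iso.refl _) (h k)

lemma of_iso_right (h : NoHoms D X Y) (e : Y ≅ Y') : NoHoms D X Y' :=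
  fun k => eq_zero_of_iso (Iso.refl X) ((shiftFunctor D k).mapIso e) (h k)

lemma of_isZero_left (h : IsZero X) : NoHoms D X Y :=
  fun _ f => h.eq_of_src f 0

lemma shift_right (h : NoHoms D X Y) (s : ℤ) : NoHoms D X (Y⟦s⟧) :=
  fun k => eq_zero_of_iso (Iso.refl X) ((shiftFunctorAdd D s k).app Y) (h (s + k))

end NoHoms

variable [∀ n : ℤ, (shiftFunctor D n).Additive]

lemma eq_zero_of_shift_left {X Y : D} (s t : ℤ) (hst : s + t = 0)
    (h : ∀ g : X ⟶ Y⟦t⟧, g = 0) : ∀ f : X⟦s⟧ ⟶ Y, f = 0 := fun f =>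
  (shiftFunctor D t).map_injective <| by
    rw [Functor.map_zero]
    exact eq_zero_of_iso ((shiftFunctorCompIsoId D s t hst).app X).symm (Iso.refl _) h _

lemma NoHoms.shift_left {X Y : D} (h : NoHoms D X Y) (s : ℤ) : NoHoms D (X⟦s⟧) Y :=
  fun k => eq_zero_of_shift_left s (-s) (add_neg_cancel s) (h.shift_right k (-s))

lemma NoHoms.of_isZero_right {X Y : D} (h : IsZero Y) : NoHoms D X Y :=
  fun k f => ((shiftFunctor D k).map_isZero h).eq_of_tgt f 0

end Shift

section Pretriangulated

variable {D : Type*} [Category D] [Preadditive D] [HasZeroObject D] [HasShift D ℤ]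
  [∀ n : ℤ, (shiftFunctor D n).Additive] [Pretriangulated D]

lemma eq_zero_obj₂_right {T : Triangle D} (hT : T ∈ distTriang D) {W : D} (k : ℤ)
    (h₁ : ∀ f : W ⟶ T.obj₁⟦k⟧, f = 0) (h₃ : ∀ f : W ⟶ T.obj₃⟦k⟧, f = 0) :
    ∀ f : W ⟶ T.obj₂⟦k⟧, f = 0 := fun f => by
  obtain ⟨g, hg⟩ := Triangle.coyoneda_exact₂ _ (Triangle.shift_distinguished T hT k) f (h₃ _)
  rw [hg, h₁ g]
  exact zero_comp

lemma eq_zero_obj₂_left {T : Triangle D} (hT : T ∈ distTriang D) {W : D}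
    (h₁ : ∀ f : T.obj₁ ⟶ W, f = 0) (h₃ : ∀ f : T.obj₃ ⟶ W, f = 0) :
    ∀ f : T.obj₂ ⟶ W, f = 0 := fun f => by
  obtain ⟨g, rfl⟩ := Triangle.yoneda_exact₂ T hT f (h₁ _)
  rw [h₃ g, comp_zero]

lemma noHoms_obj₂_right {T : Triangle D} (hT : T ∈ distTriang D) {W : D}
    (h₁ : NoHoms D W T.obj₁) (h₃ : NoHoms D W T.obj₃) : NoHoms D W T.obj₂ :=
  fun k => eq_zero_obj₂_right hT k (h₁ k) (h₃ k)

lemma noHoms_obj₂_left {T : Triangle D} (hT : T ∈ distTriang D) {W : D}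
    (h₁ : NoHoms D T.obj₁ W) (h₃ : NoHoms D T.obj₃ W) : NoHoms D T.obj₂ W :=
  fun k => eq_zero_obj₂_left hT (h₁ k) (h₃ k)

lemma forall_eq_zero_obj₂_right_iff {T : Triangle D} (hT : T ∈ distTriang D) {W : D}
    (hW : NoHoms D W T.obj₁) (k : ℤ) :
    (∀ f : W ⟶ T.obj₂⟦k⟧, f = 0) ↔ ∀ f : W ⟶ T.obj₃⟦k⟧, f = 0 :=
  ⟨fun h₂ => eq_zero_obj₂_right (rot_of_distTriang _ hT) k h₂ (hW.shift_right 1 k),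
    eq_zero_obj₂_right hT k (hW k)⟩

lemma forall_eq_zero_obj₂_left_iff {T : Triangle D} (hT : T ∈ distTriang D) {W : D}
    (hW : NoHoms D T.obj₁ W) (k : ℤ) :
    (∀ f : T.obj₂ ⟶ W⟦k⟧, f = 0) ↔ ∀ f : T.obj₃ ⟶ W⟦k⟧, f = 0 :=
  ⟨fun h₂ => eq_zero_obj₂_left (rot_of_distTriang _ hT) h₂ (hW.shift_left 1 k),
    eq_zero_obj₂_left hT (hW k)⟩

lemma genTriang.mono {S S' : Set D} {X : D} (hX : genTriang D S X) (h : S ⊆ S') :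
    genTriang D S' X := by
  induction hX with
  | of X hX => exact .of X (h hX)
  | isZero X hX => exact .isZero X hX
  | iso e _ ih => exact .iso e ih
  | shift X k _ ih => exact .shift X k ih
  | ext₂ T hT _ _ ih₁ ih₃ => exact .ext₂ T hT ih₁ ih₃

lemma noHoms_of_genTriang_right {S : Set D} {W X : D} (h : ∀ s ∈ S, NoHoms D W s)
    (hX : genTriang D S X) : NoHoms D W X := by
  induction hX with
  | of X hX => exact h X hX
  | isZero X hX => exact .of_isZero_right hX
  | iso e _ ih => exact ih.of_iso_right e
  | shift X k _ ih => exact ih.shift_right k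
  | ext₂ T hT _ _ ih₁ ih₃ => exact noHoms_obj₂_right hT ih₁ ih₃

lemma noHoms_of_genTriang_left {S : Set D} {W X : D} (h : ∀ s ∈ S, NoHoms D s W)
    (hX : genTriang D S X) : NoHoms D X W := by
  induction hX with
  | of X hX => exact h X hX
  | isZero X hX => exact .of_isZero_left hX
  | iso e _ ih => exact ih.of_iso_left e
  | shift X k _ ih => exact ih.shift_left k
  | ext₂ T hT _ _ ih₁ ih₃ => exact noHoms_obj₂_left hT ih₁ ih₃

lemma isZero_of_noHoms_of_genTriang {E A : D} (h : NoHoms D E A) (hA : genTriang D {E} A) :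
    IsZero A := by
  have hAA : NoHoms D A A := noHoms_of_genTriang_left (by rintro _ rfl; exact h) hA
  exact (IsZero.iff_id_eq_zero A).2 (hAA.hom_eq_zero (𝟙 A))

namespace IsLeftMutation

variable {E Z Y W : D}

lemma forall_eq_zero_right_iff (h : IsLeftMutation D {E} Z Y) (hW : NoHoms D W E) (k : ℤ) :
    (∀ f : W ⟶ Z⟦k⟧, f = 0) ↔ ∀ f : W ⟶ Y⟦k⟧, f = 0 := by
  obtain ⟨-, -, A, _, _, _, hA, hT⟩ := h
  exact forall_eq_zero_obj₂_right_iff hT (noHoms_of_genTriang_right (by rintro _ rfl; exact hW) hA) k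

lemma forall_eq_zero_left_iff (h : IsLeftMutation D {E} Z Y) (hW : NoHoms D E W) (k : ℤ) :
    (∀ f : Z ⟶ W⟦k⟧, f = 0) ↔ ∀ f : Y ⟶ W⟦k⟧, f = 0 := by
  obtain ⟨-, -, A, _, _, _, hA, hT⟩ := h
  exact forall_eq_zero_obj₂_left_iff hT (noHoms_of_genTriang_left (by rintro _ rfl; exact hW) hA) k

end IsLeftMutation

namespace IterLeftMut

variable {l : List D} {X Y W : D}

lemma append {l₁ l₂ : List D} (h : IterLeftMut D (l₁ ++ l₂) X Y) :
    ∃ Z, IterLeftMut D l₂ X Z ∧ IterLeftMut D l₁ Z Y := by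
  induction l₁ generalizing Y with
  | nil => exact ⟨Y, h, ⟨Iso.refl Y⟩⟩
  | cons E l₁ ih =>
    obtain ⟨Z, hZ, hmut⟩ := h
    obtain ⟨Z', h₂, h₁⟩ := ih hZ
    exact ⟨Z', h₂, Z, h₁, hmut⟩

lemma exists_split_range {E : ℕ → D} {i j : ℕ} (hij : i < j)
    (h : IterLeftMut D ((List.range j).map E) X Y) :
    ∃ Z Z', IterLeftMut D ((List.range' (i + 1) (j - (i + 1))).map E) X Z ∧
      IsLeftMutation D {E i} Z Z' ∧ IterLeftMut D ((List.range i).map E) Z' Y := by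
  have hsplit : List.range j = List.range i ++ i :: List.range' (i + 1) (j - (i + 1)) := by
    rw [List.range_eq_range', List.range_eq_range', List.range'_eq_append_iff]
    refine ⟨i, hij.le, rfl, ?_⟩
    rw [show j - i = j - (i + 1) + 1 by omega, List.range'_succ]
    simp
  rw [hsplit, List.map_append, List.map_cons] at h
  obtain ⟨Z', ⟨Z, hZ, hmut⟩, hZ'⟩ := h.append
  exact ⟨Z, Z', hZ, hmut, hZ'⟩

lemma forall_eq_zero_right_iff (h : IterLeftMut D l X Y) (hl : ∀ V ∈ l, NoHoms D W V) (k : ℤ) :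
    (∀ f : W ⟶ X⟦k⟧, f = 0) ↔ ∀ f : W ⟶ Y⟦k⟧, f = 0 := by
  induction l generalizing Y with
  | nil =>
    obtain ⟨e⟩ := h
    exact ⟨eq_zero_of_iso (Iso.refl W) ((shiftFunctor D k).mapIso e),
      eq_zero_of_iso (Iso.refl W) ((shiftFunctor D k).mapIso e.symm)⟩
  | cons E l ih =>
    obtain ⟨Z, hZ, hmut⟩ := h
    obtain ⟨hE, hl⟩ := List.forall_mem_cons.1 hl
    exact (ih hZ hl).trans (hmut.forall_eq_zero_right_iff hE k)

lemma forall_eq_zero_left_iff (h : IterLeftMut D l X Y) (hl : ∀ V ∈ l, NoHoms D V W) (k : ℤ) :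
    (∀ f : X ⟶ W⟦k⟧, f = 0) ↔ ∀ f : Y ⟶ W⟦k⟧, f = 0 := by
  induction l generalizing Y with
  | nil =>
    obtain ⟨e⟩ := h
    exact ⟨eq_zero_of_iso e (Iso.refl _), eq_zero_of_iso e.symm (Iso.refl _)⟩
  | cons E l ih =>
    obtain ⟨Z, hZ, hmut⟩ := h
    obtain ⟨hE, hl⟩ := List.forall_mem_cons.1 hl
    exact (ih hZ hl).trans (hmut.forall_eq_zero_left_iff hE k)

lemma noHoms_right_iff (h : IterLeftMut D l X Y) (hl : ∀ V ∈ l, NoHoms D W V) :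
    NoHoms D W X ↔ NoHoms D W Y :=
  forall_congr' (h.forall_eq_zero_right_iff hl)

lemma noHoms_left_iff (h : IterLeftMut D l X Y) (hl : ∀ V ∈ l, NoHoms D V W) :
    NoHoms D X W ↔ NoHoms D Y W :=
  forall_congr' (h.forall_eq_zero_left_iff hl)

lemma noHoms_of_mem (h : IterLeftMut D l X Y) (hl : l.Pairwise fun U V => NoHoms D V U) :
    ∀ V ∈ l, NoHoms D V Y := by
  induction l generalizing Y with
  | nil => simp
  | cons E l ih =>
    obtain ⟨Z, hZ, hmut⟩ := h
    obtain ⟨hE, hl⟩ := List.pairwise_cons.1 hl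
    intro V hV
    rcases List.mem_cons.1 hV with rfl | hV
    · exact hmut.2.1 V rfl
    · exact fun k => (hmut.forall_eq_zero_right_iff (hE V hV) k).1 (ih hZ hl V hV k)

lemma genTriang {S : Set D} (h : IterLeftMut D l X Y) (hX : genTriang D S X)
    (hl : ∀ V ∈ l, V ∈ S) : genTriang D S Y := by
  induction l generalizing Y with
  | nil => obtain ⟨e⟩ := h; exact .iso e hX
  | cons E l ih =>
    obtain ⟨Z, hZ, -, -, A, _, _, _, hA, hT⟩ := h
    obtain ⟨hE, hl⟩ := List.forall_mem_cons.1 hl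
    exact .ext₂ _ (rot_of_distTriang _ hT) (ih hZ hl)
      (.shift A 1 (hA.mono (Set.singleton_subset_iff.2 hE)))

end IterLeftMut

end Pretriangulated

section Linear

variable {D : Type*} [Category D] [Preadditive D] [HasShift D ℤ] [Linear ℂ D]

lemma FiniteType.finiteDimensional_hom (hft : FiniteType D) (X Y : D) :
    FiniteDimensional ℂ (X ⟶ Y) :=
  have := (hft X Y).1 0
  Module.Finite.equiv (Linear.homCongr ℂ (Iso.refl X) ((shiftFunctorZero D ℤ).app Y))

namespace IsExceptional

variable {E : D}

lemma id_ne_zero_s10 (hE : IsExceptional D E) : 𝟙 E ≠ 0 := fun h₀ => by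
  have := Module.nontrivial_of_finrank_eq_succ hE.2
  obtain ⟨f, hf⟩ := exists_ne (0 : E ⟶ E)
  exact hf (((IsZero.iff_id_eq_zero E).2 h₀).eq_of_src f 0)

lemma exists_smul_id (hE : IsExceptional D E) (f : E ⟶ E) : ∃ c : ℂ, c • 𝟙 E = f :=
  (finrank_eq_one_iff_of_nonzero' _ hE.id_ne_zero_s10).1 hE.2 f

end IsExceptional

variable [HasZeroObject D] [∀ n : ℤ, (shiftFunctor D n).Additive] [Pretriangulated D]

lemma eq_zero_obj₃_of_isExceptional {T : Triangle D} (hT : T ∈ distTriang D)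
    (hE : IsExceptional D T.obj₁) (hf : T.mor₁ ≠ 0)
    (h : ∀ k : ℤ, k ≠ 0 → ∀ f : T.obj₁ ⟶ T.obj₂⟦k⟧, f = 0) :
    ∀ k : ℤ, k ≠ 0 → ∀ f : T.obj₁ ⟶ T.obj₃⟦k⟧, f = 0 := by
  intro k hk g
  by_cases hk₁ : k = -1
  · subst hk₁
    -- `g` followed by `T.obj₃⟦-1⟧ ⟶ T.obj₁` is a scalar `c`; `c • T.mor₁ = 0` forces `c = 0`,
    -- so `g` factors through `T.obj₂⟦-1⟧`
    obtain ⟨c, hc⟩ := hE.exists_smul_id (g ≫ T.invRotate.mor₁)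
    have hc₀ : c = 0 := by
      have : c • T.mor₁ = 0 :=
        calc c • T.mor₁ = (c • 𝟙 T.obj₁) ≫ T.mor₁ := by rw [Linear.smul_comp, Category.id_comp]
          _ = (g ≫ T.invRotate.mor₁) ≫ T.mor₁ := congrArg (· ≫ T.mor₁) hc
          _ = 0 := (Category.assoc _ _ _).trans <| (congrArg (g ≫ ·)
              (comp_distTriang_mor_zero₁₂ _ (inv_rot_of_distTriang _ hT))).trans comp_zero
      exact (smul_eq_zero.1 this).resolve_right hf
    obtain ⟨w, hw⟩ := Triangle.coyoneda_exact₂ _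
      (inv_rot_of_distTriang _ (inv_rot_of_distTriang _ hT)) g
      (hc.symm.trans (by rw [hc₀, zero_smul]; rfl))
    rw [hw, h (-1) (by norm_num) w]
    exact zero_comp
  · exact eq_zero_obj₂_right (rot_of_distTriang _ hT) k (h k hk)
      (eq_zero_of_iso (Iso.refl _) ((shiftFunctorAdd D 1 k).app T.obj₁)
        (hE.1 (1 + k) (by omega))) g

lemma finrank_hom_obj₃_lt (hft : FiniteType D) {T : Triangle D} (hT : T ∈ distTriang D)
    (h : ∀ f : T.obj₁ ⟶ T.obj₁⟦(1 : ℤ)⟧, f = 0) (hf : T.mor₁ ≠ 0) :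
    Module.finrank ℂ (T.obj₁ ⟶ T.obj₃) < Module.finrank ℂ (T.obj₁ ⟶ T.obj₂) := by
  have := hft.finiteDimensional_hom T.obj₁ T.obj₂
  let q := Linear.rightComp ℂ T.obj₁ T.mor₂
  have hq : Function.Surjective q := fun g => by
    obtain ⟨w, hw⟩ := Triangle.coyoneda_exact₃ _ hT g (h _)
    exact ⟨w, hw.symm⟩
  have hker : 0 < Module.finrank ℂ (LinearMap.ker q) :=
    Module.finrank_pos_iff_exists_ne_zero.2
      ⟨⟨T.mor₁, LinearMap.mem_ker.2 (comp_distTriang_mor_zero₁₂ _ hT)⟩,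
        fun h₀ => hf (congrArg Subtype.val h₀)⟩
  have := LinearMap.finrank_range_add_finrank_ker q
  rw [LinearMap.range_eq_top.2 hq, finrank_top] at this
  omega

/-- Induction on `dim Hom(E, A)`: the cone of a nonzero `E ⟶ A` is again such an object with
smaller `dim Hom(E, -)`. -/
lemma hom_eq_zero_of_genTriang_singleton (hft : FiniteType D) {E F A : D}
    (hE : IsExceptional D E) (hEF : ∀ f : E⟦(1 : ℤ)⟧ ⟶ F, f = 0) (hu : ∃ u : E ⟶ F, u ≠ 0)
    (hA : genTriang D {E} A) (hEA : ∀ k : ℤ, k ≠ 0 → ∀ f : E ⟶ A⟦k⟧, f = 0)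
    (hAF : ∀ f : A ⟶ F, f = 0) : ∀ f : E ⟶ A, f = 0 := by
  induction hd : Module.finrank ℂ (E ⟶ A) using Nat.strong_induction_on generalizing A with
  | _ d ih =>
  by_contra! ⟨f, hf⟩
  obtain ⟨B, q, r, hT⟩ := distinguished_cocone_triangle f
  have hB : genTriang D {E} B :=
    .ext₂ _ (rot_of_distTriang _ hT) hA (.shift E 1 (.of E rfl))
  have hEB := eq_zero_obj₃_of_isExceptional hT hE hf hEA
  have hBF : ∀ g : B ⟶ F, g = 0 := eq_zero_obj₂_left (rot_of_distTriang _ hT) hAF hEF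
  have hlt := hd ▸ finrank_hom_obj₃_lt hft hT (hE.1 1 one_ne_zero) hf
  have hB₀ : IsZero B :=
    isZero_of_noHoms_of_genTriang (.of_hom_eq_zero (ih _ hlt hB hEB hBF rfl) hEB) hB
  obtain ⟨u, hu⟩ := hu
  obtain ⟨g, hg⟩ := Triangle.yoneda_exact₂ _ (inv_rot_of_distTriang _ hT) u
    (((shiftFunctor D (-1)).map_isZero hB₀).eq_of_src _ _)
  exact hu (by rw [hg, show g = 0 from hAF g]; exact comp_zero)

end Linear

section Collection

variable {D : Type*} [Category D] [Preadditive D] [HasZeroObject D] [HasShift D ℤ]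
  [∀ n : ℤ, (shiftFunctor D n).Additive] [Pretriangulated D] {n : ℕ} {E F : ℕ → D}

lemma dual_mem_genTriang (hdual : ∀ j < n, IterLeftMut D ((List.range j).map E) (E j) (F j))
    {i : ℕ} (hi : i < n) : genTriang D {X | ∃ l ≤ i, X = E l} (F i) :=
  (hdual i hi).genTriang (.of _ ⟨i, le_rfl, rfl⟩) <| by
    simpa only [List.forall_mem_map, List.mem_range] using fun l hl => ⟨l, hl.le, rfl⟩

variable [Linear ℂ D]

lemma noHoms_exc_dual (hE : ExcCollection D n E)
    (hdual : ∀ j < n, IterLeftMut D ((List.range j).map E) (E j) (F j))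
    {i l : ℕ} (hi : i < n) (hl : l < n) (hli : l ≠ i) : NoHoms D (E l) (F i) := by
  rcases hli.lt_or_gt with hli | hli
  · refine (hdual i hi).noHoms_of_mem ?_ (E l) (List.mem_map_of_mem (List.mem_range.2 hli))
    exact List.pairwise_map.2 <| (List.pairwise_lt_range).imp_of_mem
      fun _ hb hab => hE.2 _ _ hab ((List.mem_range.1 hb).trans hi)
  · refine noHoms_of_genTriang_right ?_ (dual_mem_genTriang hdual hi)
    rintro _ ⟨l', hl', rfl⟩
    exact hE.2 l' l (hl'.trans_lt hli) hl

lemma forall_eq_zero_exc_dual_iff (hE : ExcCollection D n E)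
    (hdual : ∀ j < n, IterLeftMut D ((List.range j).map E) (E j) (F j))
    {i : ℕ} (hi : i < n) (k : ℤ) :
    (∀ f : E i ⟶ (E i)⟦k⟧, f = 0) ↔ ∀ f : E i ⟶ (F i)⟦k⟧, f = 0 :=
  (hdual i hi).forall_eq_zero_right_iff (by
    simpa only [List.forall_mem_map, List.mem_range] using fun l hl => hE.2 l i hl hi) k

lemma exists_exc_dual_ne_zero (hE : ExcCollection D n E)
    (hdual : ∀ j < n, IterLeftMut D ((List.range j).map E) (E j) (F j))
    {i : ℕ} (hi : i < n) : ∃ u : E i ⟶ F i, u ≠ 0 := by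
  by_contra! h
  have h₀ := (forall_eq_zero_exc_dual_iff hE hdual hi 0).2
    (eq_zero_of_iso (Iso.refl _) ((shiftFunctorZero D ℤ).app (F i)).symm h)
  exact (hE.1 i hi).id_ne_zero_s10
    (eq_zero_of_iso (Iso.refl _) ((shiftFunctorZero D ℤ).app (E i)) h₀ (𝟙 (E i)))

lemma shift_one_exc_dual_eq_zero (hE : ExcCollection D n E)
    (hdual : ∀ j < n, IterLeftMut D ((List.range j).map E) (E j) (F j))
    {i : ℕ} (hi : i < n) : ∀ f : (E i)⟦(1 : ℤ)⟧ ⟶ F i, f = 0 :=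
  eq_zero_of_shift_left 1 (-1) (add_neg_cancel 1)
    ((forall_eq_zero_exc_dual_iff hE hdual hi (-1)).1 ((hE.1 i hi).1 (-1) (by norm_num)))

lemma noHoms_dual_of_lt (hE : ExcCollection D n E)
    (hdual : ∀ j < n, IterLeftMut D ((List.range j).map E) (E j) (F j))
    {i j : ℕ} (hij : i < j) (hj : j < n) : NoHoms D (F i) (F j) := by
  refine noHoms_of_genTriang_left ?_ (dual_mem_genTriang hdual (hij.trans hj))
  rintro _ ⟨l, hl, rfl⟩
  exact noHoms_exc_dual hE hdual hj ((hl.trans_lt hij).trans hj) (by omega)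

lemma noHoms_of_shift_one_dual_eq_zero (hft : FiniteType D) (hE : ExcCollection D n E)
    (hdual : ∀ j < n, IterLeftMut D ((List.range j).map E) (E j) (F j))
    {i j : ℕ} (hij : i < j) (hj : j < n)
    (hstrong : ∀ k : ℤ, k ≠ 0 → ∀ f : E i ⟶ (E j)⟦k⟧, f = 0)
    (hmid : ∀ l, i < l → l < j → NoHoms D (E i) (E l))
    (htilt : ∀ f : F j ⟶ (F i)⟦(1 : ℤ)⟧, f = 0) :
    NoHoms D (E i) (E j) ∧ NoHoms D (F j) (F i) := by
  have hi := hij.trans hj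
  obtain ⟨Z, Z', hZ, hmut, hZ'⟩ := (hdual j hj).exists_split_range hij
  have hEiZ' : NoHoms D (E i) Z' := hmut.2.1 _ rfl
  obtain ⟨-, -, A, _, _, _, hA, hT⟩ := hmut
  have hmidZ : ∀ V ∈ (List.range' (i + 1) (j - (i + 1))).map E, NoHoms D (E i) V := by
    simpa only [List.forall_mem_map, List.mem_range'_1] using
      fun l hl => hmid l (by omega) (by omega)
  have hmidF : ∀ V ∈ (List.range' (i + 1) (j - (i + 1))).map E, NoHoms D V (F i) := by
    simpa only [List.forall_mem_map, List.mem_range'_1] using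
      fun l hl => noHoms_exc_dual hE hdual hi (by omega) (by omega)
  have hlowF : ∀ V ∈ (List.range i).map E, NoHoms D V (F i) := by
    simpa only [List.forall_mem_map, List.mem_range] using
      fun l hl => noHoms_exc_dual hE hdual hi (hl.trans hi) hl.ne
  have hZF : NoHoms D Z (F i) :=
    (hZ.noHoms_left_iff hmidF).1 (noHoms_exc_dual hE hdual hi hj hij.ne')
  have hEA : ∀ k : ℤ, k ≠ 0 → ∀ f : E i ⟶ A⟦k⟧, f = 0 := fun k hk =>
    eq_zero_obj₂_right (inv_rot_of_distTriang _ hT) k (hEiZ'.shift_right (-1) k)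
      ((hZ.forall_eq_zero_right_iff hmidZ k).1 (hstrong k hk))
  have hAF : ∀ f : A ⟶ F i, f = 0 :=
    eq_zero_obj₂_left (inv_rot_of_distTriang _ hT)
      (eq_zero_of_shift_left (-1) 1 (neg_add_cancel 1)
        ((hZ'.forall_eq_zero_left_iff hlowF 1).2 htilt))
      hZF.hom_eq_zero
  have hA₀ : IsZero A := isZero_of_noHoms_of_genTriang (.of_hom_eq_zero
    (hom_eq_zero_of_genTriang_singleton hft (hE.1 i hi) (shift_one_exc_dual_eq_zero hE hdual hi)
      (exists_exc_dual_ne_zero hE hdual hi) hA hEA hAF) hEA) hA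
  refine ⟨(hZ.noHoms_right_iff hmidZ).2 (noHoms_obj₂_right hT (.of_isZero_right hA₀) hEiZ'),
    (hZ'.noHoms_left_iff hlowF).1 ?_⟩
  exact noHoms_obj₂_left (rot_of_distTriang _ hT) hZF ((NoHoms.of_isZero_left hA₀).shift_left 1)

lemma noHoms_of_tilting (hft : FiniteType D) (hE : ExcCollection D n E)
    (hstrong : ∀ i < n, ∀ j < n, ∀ k : ℤ, k ≠ 0 → ∀ f : E i ⟶ (E j)⟦k⟧, f = 0)
    (hdual : ∀ j < n, IterLeftMut D ((List.range j).map E) (E j) (F j))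
    {φ : ℕ → ℤ} (hlev : ∀ i j, i ≤ j → j < n → φ i ≤ φ j) {m : ℤ}
    (htilt : ∀ i < n, ∀ j < n, φ i = m →
      (i ≤ j → PRelated D F i j (φ j - m)) ∧ (j ≤ i → PRelated D F j i (m - φ j)))
    {i j : ℕ} (hij : i < j) (hj : j < n) (hφi : φ i = m) (hφj : φ j = m) :
    NoHoms D (E i) (E j) ∧ NoHoms D (F j) (F i) := by
  induction j using Nat.strong_induction_on with
  | _ j ih =>
  have hi := hij.trans hj
  refine noHoms_of_shift_one_dual_eq_zero hft hE hdual hij hj (hstrong i hi j hj)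
    (fun l hil hlj => (ih l hlj hil (hlj.trans hj) ?_).1) ?_
  · exact le_antisymm (hφj ▸ hlev l j hlj.le hj) (hφi ▸ hlev i l hil.le (hlj.trans hj))
  · exact (htilt i hi j hj hφi).1 hij.le 1 (by rw [hφj, sub_self]; exact one_ne_zero)

end Collection

theorem tilting_level_orthogonal (hft : FiniteType C) (n : ℕ) (E F : ℕ → C)
    (hE : ExcCollection C n E)
    (hstrong : ∀ i < n, ∀ j < n, ∀ k : ℤ, k ≠ 0 → ∀ f : E i ⟶ (E j)⟦k⟧, f = 0)
    (hdual : ∀ j < n, IterLeftMut C ((List.range j).map E) (E j) (F j))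
    (φ : ℕ → ℤ) (hlev : ∀ i j, i ≤ j → j < n → φ i ≤ φ j) (m : ℤ)
    (htilt : ∀ i < n, ∀ j < n, φ i = m →
      (i ≤ j → PRelated C F i j (φ j - m)) ∧ (j ≤ i → PRelated C F j i (m - φ j)))
    (i j : ℕ) (hi : i < n) (hj : j < n) (hij : i ≠ j)
    (hφi : φ i = m) (hφj : φ j = m) :
    (NoHoms C (E i) (E j) ∧ NoHoms C (E j) (E i)) ∧
      (NoHoms C (F i) (F j) ∧ NoHoms C (F j) (F i)) := by
  rcases hij.lt_or_gt with h | h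
  · obtain ⟨hEE, hFF⟩ := noHoms_of_tilting hft hE hstrong hdual hlev htilt h hj hφi hφj
    exact ⟨⟨hEE, hE.2 i j h hj⟩, ⟨noHoms_dual_of_lt hE hdual h hj, hFF⟩⟩
  · obtain ⟨hEE, hFF⟩ := noHoms_of_tilting hft hE hstrong hdual hlev htilt h hi hφj hφi
    exact ⟨⟨hE.2 j i h hi, hEE⟩, ⟨hFF, noHoms_dual_of_lt hE hdual h hi⟩⟩
end
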